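/- Fix s ∈ (0,1). For every integer l ≥ 2 and every integer n ≥ 0, l^{2s} · ∫₁^{π/2} θ^{-2s-1} (1 − |P_l(cos(θ/l))|) dθ ≤ λ_{3,B}(n,l) ≤ l^{2s} · ∫_{1/3}^{+∞} 2·θ^{-2s-1} dθ. -/

import Mathlib

open MeasureTheory Real

/-- The `l`-th Legendre polynomial via the Rodrigues formula. -/
noncomputable def legP (l : ℕ) (x : ℝ) : ℝ :=
  (1 / (2 ^ l * Nat.factorial l)) * iteratedDeriv l (fun y : ℝ => (y ^ 2 - 1) ^ l) x

/-- The term `λ_{3,B}(n,l)` in the splitting of the Boltzmann eigenvalues. -/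
noncomputable def lam3B (s : ℝ) (n l : ℕ) : ℝ :=
  ∫ θ in (1 / ((l : ℝ) + 2))..(Real.pi / 4),
    θ ^ (-2 * s - 1) * (1 - legP l (Real.cos θ) * (Real.cos θ) ^ (2 * n + l))

/-!
The integrand of `λ_{3,B}` is squeezed between `θ^{-2s-1} (1 - |P_l(cos θ)|)` and `2 θ^{-2s-1}`,
and is nonnegative, because `|P_l| ≤ 1` on `[-1, 1]`; this bound comes from Legendre's equation
`(1 - x²) P'' - 2x P' + l(l+1) P = 0` by the energy method. For the lower bound, restrict to
`[1/l, π/(2l)] ⊆ [1/(l+2), π/4]` and substitute `θ = u / l`; for the upper bound, enlarge the range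
to `(1/(3l), ∞)` and use the homogeneity of `∫ θ^{-2s-1}`.
-/

open Polynomial Nat Set

namespace Polynomial

theorem iteratedDeriv_eval {𝕜 : Type*} [NontriviallyNormedField 𝕜] (p : 𝕜[X]) (n : ℕ) :
    iteratedDeriv n (fun x => p.eval x) = fun x => (derivative^[n] p).eval x := by
  rw [iteratedDeriv_eq_iterate]
  induction n generalizing p with
  | zero => rfl
  | succ n ih =>
    rw [Function.iterate_succ_apply, Function.iterate_succ_apply, ← ih]
    congr 1
    funext x
    exact p.deriv

theorem eval_iterate_derivative_X_sub_C_pow_mul {R : Type*} [CommRing R] (n : ℕ) (a b : R) :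
    (derivative^[n] ((X - C a) ^ n * (X - C b) ^ n)).eval a = n ! * (a - b) ^ n := by
  rw [iterate_derivative_mul, eval_finsetSum, Finset.sum_eq_single 0]
  · simp [iterate_derivative_X_sub_pow_self]
  · intro k hk hk0
    have hkn : n - (n - k) = k := by grind
    simp [iterate_derivative_X_sub_pow, hkn, zero_pow hk0]
  · simp

theorem rodrigues_ode {R : Type*} [CommRing R] (l : ℕ) :
    (1 - X ^ 2) * derivative^[l + 2] ((X ^ 2 - 1 : R[X]) ^ l)
      - 2 * X * derivative^[l + 1] ((X ^ 2 - 1) ^ l)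
      + (l * (l + 1) : R[X]) * derivative^[l] ((X ^ 2 - 1) ^ l) = 0 := by
  obtain _ | k := l
  · simp
  set q : R[X] := (X ^ 2 - 1) ^ (k + 1)
  -- differentiate `(X² - 1) q' = 2 (k + 1) X q` `k + 2` times by Leibniz's rule
  have hq : derivative q * X * X - derivative q = C (2 * (k + 1 : R)) * (q * X) := by
    simp only [q, derivative_pow, derivative_sub, derivative_X, derivative_one, sub_zero,
      add_tsub_cancel_right, map_mul, map_add, map_natCast, map_one, map_ofNat, cast_add,
      cast_one, cast_ofNat]
    ring
  have h := congrArg (derivative^[k + 2]) hq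
  rw [iterate_derivative_sub, iterate_derivative_C_mul, iterate_derivative_mul_X,
    iterate_derivative_derivative_mul_X, iterate_derivative_mul_X q,
    show k + 2 - 1 = k + 1 by rfl, iterate_derivative_derivative_mul_X,
    ← Function.iterate_succ_apply, show (k + 2).succ = k + 1 + 2 from rfl,
    show k + 2 + 1 = k + 1 + 2 from rfl, show k + 2 = k + 1 + 1 from rfl] at h
  simp only [nsmul_eq_mul, map_mul, map_add, map_natCast, map_ofNat, map_one] at h
  push_cast at h ⊢
  linear_combination -h

/-- Energy method: `N p² + (1 - x²) p'²` has derivative `2 x p'²`, so on `[-1, 1]` it is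
largest at the endpoints, where it equals `N p²`. -/
theorem sq_eval_le_max_of_legendre_ode {p : ℝ[X]} {N : ℝ} (hN : 0 < N)
    (hp : (1 - X ^ 2) * derivative (derivative p) - 2 * X * derivative p + C N * p = 0)
    {x : ℝ} (hx : |x| ≤ 1) :
    p.eval x ^ 2 ≤ max (p.eval 1 ^ 2) (p.eval (-1) ^ 2) := by
  set G : ℝ[X] := C N * p ^ 2 + (1 - X ^ 2) * derivative p ^ 2
  have hG' : derivative G = 2 * X * derivative p ^ 2 := by
    simp only [G, derivative_add, derivative_mul, derivative_C, derivative_sub, derivative_one,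
      derivative_pow, derivative_X, Nat.cast_ofNat, map_ofNat, zero_mul, zero_add]
    linear_combination (2 * derivative p) * hp
  have hderiv (y : ℝ) : deriv (fun y => G.eval y) y = 2 * y * (derivative p).eval y ^ 2 := by
    simp [Polynomial.deriv, hG']
  have hGx : N * p.eval x ^ 2 ≤ G.eval x := by
    have : 0 ≤ (1 - x ^ 2) * (derivative p).eval x ^ 2 :=
      mul_nonneg (sub_nonneg.mpr ((sq_le_one_iff_abs_le_one x).mpr hx)) (sq_nonneg _)
    simp only [G, eval_add, eval_mul, eval_C, eval_pow, eval_sub, eval_one, eval_X]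
    linarith
  have hG1 : G.eval 1 = N * p.eval 1 ^ 2 := by simp [G]
  have hGm1 : G.eval (-1) = N * p.eval (-1) ^ 2 := by simp [G]
  obtain ⟨hx₁, hx₂⟩ := abs_le.mp hx
  rcases le_total 0 x with h0 | h0
  · have hmono : MonotoneOn (fun y => G.eval y) (Icc 0 1) := by
      refine monotoneOn_of_deriv_nonneg (convex_Icc 0 1) G.continuousOn
        G.differentiable.differentiableOn fun y hy => ?_
      rw [interior_Icc] at hy
      rw [hderiv]
      exact mul_nonneg (mul_nonneg zero_le_two hy.1.le) (sq_nonneg _)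
    have hGle := hmono ⟨h0, hx₂⟩ ⟨zero_le_one, le_rfl⟩ hx₂
    exact (le_of_mul_le_mul_left (by linarith) hN).trans (le_max_left _ _)
  · have hanti : AntitoneOn (fun y => G.eval y) (Icc (-1) 0) := by
      refine antitoneOn_of_deriv_nonpos (convex_Icc (-1) 0) G.continuousOn
        G.differentiable.differentiableOn fun y hy => ?_
      rw [interior_Icc] at hy
      rw [hderiv]
      nlinarith [hy.2, sq_nonneg ((derivative p).eval y)]
    have hGle := hanti ⟨le_rfl, by norm_num⟩ ⟨hx₁, h0⟩ hx₁
    exact (le_of_mul_le_mul_left (by linarith) hN).trans (le_max_right _ _)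

noncomputable def legendre (l : ℕ) : ℝ[X] :=
  C (2 ^ l * l ! : ℝ)⁻¹ * derivative^[l] ((X ^ 2 - 1) ^ l)

theorem X_sq_sub_one_pow {R : Type*} [CommRing R] (l : ℕ) :
    (X ^ 2 - 1 : R[X]) ^ l = (X - C 1) ^ l * (X - C (-1)) ^ l := by
  rw [← mul_pow]
  simp only [map_neg, map_one]
  ring

theorem legendre_eval_one (l : ℕ) : (legendre l).eval 1 = 1 := by
  rw [legendre, eval_mul, eval_C, X_sq_sub_one_pow, eval_iterate_derivative_X_sub_C_pow_mul]
  field_simp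
  norm_num

theorem legendre_eval_neg_one (l : ℕ) : (legendre l).eval (-1) = (-1) ^ l := by
  rw [legendre, eval_mul, eval_C, X_sq_sub_one_pow, mul_comm ((X - C 1) ^ l),
    eval_iterate_derivative_X_sub_C_pow_mul]
  field_simp
  rw [show (-1 - 1 : ℝ) = 2 * -1 by norm_num, mul_pow]

theorem legendre_ode (l : ℕ) :
    (1 - X ^ 2) * derivative (derivative (legendre l)) - 2 * X * derivative (legendre l)
      + C ((l : ℝ) * (l + 1)) * legendre l = 0 := by
  have h := congrArg (C (2 ^ l * l ! : ℝ)⁻¹ * ·) (rodrigues_ode (R := ℝ) l)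
  simp only [legendre, derivative_C_mul, ← Function.iterate_succ_apply' derivative] at h ⊢
  simp only [map_mul, map_natCast, map_add, map_one]
  linear_combination h

theorem abs_eval_legendre_le_one (l : ℕ) {x : ℝ} (hx : |x| ≤ 1) :
    |(legendre l).eval x| ≤ 1 := by
  obtain _ | k := l
  · simp [legendre]
  have h := sq_eval_le_max_of_legendre_ode (by positivity) (legendre_ode (k + 1)) hx
  rw [legendre_eval_one, legendre_eval_neg_one, ← pow_mul, mul_comm, pow_mul] at h
  rw [← sq_le_one_iff_abs_le_one]
  simpa using h

end Polynomial

theorem legP_eq_eval_legendre (l : ℕ) (x : ℝ) : legP l x = (legendre l).eval x := by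
  have h : (fun y : ℝ => (y ^ 2 - 1) ^ l) = fun y => ((X ^ 2 - 1 : ℝ[X]) ^ l).eval y := by
    simp
  rw [legP, h, iteratedDeriv_eval, legendre, eval_mul, eval_C, one_div]

theorem continuous_legP (l : ℕ) : Continuous (legP l) := by
  simpa only [funext (legP_eq_eval_legendre l)] using (legendre l).continuous

theorem abs_legP_le_one (l : ℕ) {x : ℝ} (hx : |x| ≤ 1) : |legP l x| ≤ 1 := by
  simpa only [legP_eq_eval_legendre] using abs_eval_legendre_le_one l hx

section RpowIntegrals

variable {e : ℝ}

theorem intervalIntegrable_rpow_mul {a b : ℝ} (ha : 0 < a) (hb : 0 < b) {f : ℝ → ℝ}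
    (hf : Continuous f) : IntervalIntegrable (fun θ => θ ^ e * f θ) volume a b :=
  (intervalIntegral.intervalIntegrable_rpow (Or.inr (notMem_uIcc_of_lt ha hb))).mul_continuousOn
    hf.continuousOn

theorem integral_rpow_mul_comp_div {a b c : ℝ} (ha : 0 ≤ a) (hb : 0 ≤ b) (hc : 0 < c)
    (f : ℝ → ℝ) :
    ∫ θ in a..b, θ ^ e * f (θ / c) = c ^ (e + 1) * ∫ u in a / c..b / c, u ^ e * f u := by
  have h : EqOn (fun θ => θ ^ e * f (θ / c)) (fun θ => c ^ e * ((θ / c) ^ e * f (θ / c)))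
      (uIcc a b) := by
    intro θ hθ
    have hθ : 0 ≤ θ := by rcases mem_uIcc.mp hθ with h | h <;> linarith [h.1]
    have hce : c ^ e ≠ 0 := (rpow_pos_of_pos hc e).ne'
    simp only [div_rpow hθ hc.le]
    field_simp
  rw [intervalIntegral.integral_congr h, intervalIntegral.integral_const_mul,
    intervalIntegral.integral_comp_div (fun u => u ^ e * f u) hc.ne', smul_eq_mul,
    rpow_add_one hc.ne']
  ring

theorem integral_Ioi_rpow_div {c k : ℝ} (he : e < -1) (hc : 0 < c) (hk : 0 < k) :
    ∫ θ in Ioi (c / k), θ ^ e = k ^ (-(e + 1)) * ∫ θ in Ioi c, θ ^ e := by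
  rw [integral_Ioi_rpow_of_lt he (div_pos hc hk), integral_Ioi_rpow_of_lt he hc,
    div_rpow hc.le hk.le, rpow_neg hk.le]
  field_simp

theorem intervalIntegral_rpow_le_integral_Ioi {a b c : ℝ} (he : e < -1) (hc : 0 < c)
    (hca : c ≤ a) (hab : a ≤ b) :
    ∫ θ in a..b, θ ^ e ≤ ∫ θ in Ioi c, θ ^ e := by
  rw [intervalIntegral.integral_of_le hab]
  refine setIntegral_mono_set (integrableOn_Ioi_rpow_of_lt he hc) ?_ ?_
  · filter_upwards [self_mem_ae_restrict measurableSet_Ioi] with θ hθ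
    exact rpow_nonneg (hc.trans hθ).le e
  · exact (Ioc_subset_Ioi_self.trans (Ioi_subset_Ioi hca)).eventuallyLE

end RpowIntegrals

theorem one_sub_legP_mul_cos_pow_bounds (l m : ℕ) (θ : ℝ) :
    1 - |legP l (cos θ)| ≤ 1 - legP l (cos θ) * cos θ ^ m ∧
      0 ≤ 1 - legP l (cos θ) * cos θ ^ m ∧ 1 - legP l (cos θ) * cos θ ^ m ≤ 2 := by
  have hP := abs_legP_le_one l (abs_cos_le_one θ)
  have hpow : |cos θ ^ m| ≤ 1 := by
    rw [abs_pow]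
    exact pow_le_one₀ (abs_nonneg _) (abs_cos_le_one θ)
  have hprod : |legP l (cos θ) * cos θ ^ m| ≤ |legP l (cos θ)| := by
    rw [abs_mul]
    exact mul_le_of_le_one_right (abs_nonneg _) hpow
  obtain ⟨h₁, h₂⟩ := abs_le.mp (hprod.trans hP)
  exact ⟨by linarith [le_abs_self (legP l (cos θ) * cos θ ^ m)], by linarith, by linarith⟩

theorem continuous_one_sub_legP_mul_cos_pow (l m : ℕ) :
    Continuous fun θ => 1 - legP l (cos θ) * cos θ ^ m :=
  continuous_const.sub (((continuous_legP l).comp continuous_cos).mul (continuous_cos.pow m))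

theorem le_lam3B (s : ℝ) {l : ℕ} (hl : 2 ≤ l) (n : ℕ) :
    (l : ℝ) ^ (2 * s) *
        (∫ θ in (1 : ℝ)..(π / 2), θ ^ (-2 * s - 1) * (1 - |legP l (cos (θ / l))|))
      ≤ lam3B s n l := by
  have hl2 : (2 : ℝ) ≤ l := by exact_mod_cast hl
  have hl0 : (0 : ℝ) < l := by linarith
  set e := -2 * s - 1
  set g := fun θ : ℝ => θ ^ e * (1 - legP l (cos θ) * cos θ ^ (2 * n + l))
  have hg := continuous_one_sub_legP_mul_cos_pow l (2 * n + l)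
  rw [integral_rpow_mul_comp_div zero_le_one (by positivity) hl0
      (fun u => 1 - |legP l (cos u)|), ← mul_assoc, ← rpow_add hl0,
    show 2 * s + (e + 1) = 0 by ring, rpow_zero, one_mul]
  calc ∫ u in 1 / l..π / 2 / l, u ^ e * (1 - |legP l (cos u)|)
      ≤ ∫ u in 1 / l..π / 2 / l, g u := by
        refine intervalIntegral.integral_mono_on (by gcongr; linarith [pi_gt_three])
          (intervalIntegrable_rpow_mul (by positivity) (by positivity)
            (continuous_const.sub ((continuous_legP l).comp continuous_cos).abs))
          (intervalIntegrable_rpow_mul (by positivity) (by positivity) hg) fun u hu => ?_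
        have hu0 : 0 < u := lt_of_lt_of_le (by positivity) hu.1
        exact mul_le_mul_of_nonneg_left (one_sub_legP_mul_cos_pow_bounds l _ u).1
          (rpow_nonneg hu0.le e)
    _ ≤ ∫ u in 1 / (l + 2)..π / 4, g u := by
        refine intervalIntegral.integral_mono_interval (by gcongr; linarith)
          (by gcongr; linarith [pi_gt_three]) ?_ ?_
          (intervalIntegrable_rpow_mul (by positivity) (by positivity) hg)
        · rw [div_div, div_le_div_iff_of_pos_left pi_pos (by positivity) (by norm_num)]
          linarith
        · filter_upwards [self_mem_ae_restrict measurableSet_Ioc] with u hu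
          exact mul_nonneg (rpow_nonneg (lt_trans (by positivity) hu.1).le e)
            (one_sub_legP_mul_cos_pow_bounds l _ u).2.1

theorem lam3B_le (s : ℝ) (hs : 0 < s) {l : ℕ} (hl : 1 ≤ l) (n : ℕ) :
    lam3B s n l ≤ (l : ℝ) ^ (2 * s) * ∫ θ in Ioi (1 / 3 : ℝ), 2 * θ ^ (-2 * s - 1) := by
  have hl1 : (1 : ℝ) ≤ l := by exact_mod_cast hl
  have hl0 : (0 : ℝ) < l := by linarith
  set e := -2 * s - 1
  have he : e < -1 := by linarith
  have hab : 1 / ((l : ℝ) + 2) ≤ π / 4 :=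
    (one_div_le_one_div_of_le (by norm_num : (0 : ℝ) < 3) (by linarith)).trans
      (by linarith [pi_gt_three])
  calc lam3B s n l ≤ ∫ θ in 1 / ((l : ℝ) + 2)..π / 4, 2 * θ ^ e := by
        refine intervalIntegral.integral_mono_on hab
          (intervalIntegrable_rpow_mul (by positivity) (by positivity)
            (continuous_one_sub_legP_mul_cos_pow l (2 * n + l)))
          ((intervalIntegral.intervalIntegrable_rpow
            (Or.inr (notMem_uIcc_of_lt (by positivity) (by positivity)))).const_mul 2)
          fun θ hθ => ?_
        have hθ0 : 0 < θ := lt_of_lt_of_le (by positivity) hθ.1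
        exact (mul_le_mul_of_nonneg_left (one_sub_legP_mul_cos_pow_bounds l _ θ).2.2
          (rpow_nonneg hθ0.le e)).trans_eq (mul_comm _ _)
    _ = 2 * ∫ θ in 1 / ((l : ℝ) + 2)..π / 4, θ ^ e := intervalIntegral.integral_const_mul _ _
    _ ≤ 2 * ∫ θ in Ioi (1 / 3 / (l : ℝ)), θ ^ e := by
        gcongr
        refine intervalIntegral_rpow_le_integral_Ioi he (by positivity) ?_ hab
        rw [div_div]
        exact one_div_le_one_div_of_le (by positivity) (by linarith)
    _ = _ := by
        rw [integral_Ioi_rpow_div he (by norm_num) hl0, integral_const_mul,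
          show -(e + 1) = 2 * s by ring]
        ring

theorem lam3B_two_sided_general (s : ℝ) (hs0 : 0 < s)
    (l : ℕ) (hl : 2 ≤ l) (n : ℕ) :
    (l : ℝ) ^ (2 * s) *
        (∫ θ in (1:ℝ)..(Real.pi / 2),
          θ ^ (-2 * s - 1) * (1 - |legP l (Real.cos (θ / (l : ℝ)))|))
      ≤ lam3B s n l ∧
    lam3B s n l ≤
      (l : ℝ) ^ (2 * s) * ∫ θ in Set.Ioi (1/3 : ℝ), 2 * θ ^ (-2 * s - 1) :=
  ⟨le_lam3B s hl n, lam3B_le s hs0 (by omega) n⟩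

theorem lam3B_two_sided (s : ℝ) (hs0 : 0 < s) (hs1 : s < 1)
    (l : ℕ) (hl : 2 ≤ l) (n : ℕ) :
    (l : ℝ) ^ (2 * s) *
        (∫ θ in (1:ℝ)..(Real.pi / 2),
          θ ^ (-2 * s - 1) * (1 - |legP l (Real.cos (θ / (l : ℝ)))|))
      ≤ lam3B s n l ∧
    lam3B s n l ≤
      (l : ℝ) ^ (2 * s) * ∫ θ in Set.Ioi (1/3 : ℝ), 2 * θ ^ (-2 * s - 1) :=
  lam3B_two_sided_general s hs0 l hl n
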